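/- arXiv:1204.1037 — 5 statements merged into one kernel-verified Lean document; each statement's English description precedes it below -/
import Mathlib

section
/- Let s = s₁⋯s_m be a sign string with s₁ = +, and let T_s be a semistandard Young tableau of content s. Then the conjugate of the standardization of the promoted tableau equals the promotion of the conjugate of the standardization: (jdt(T_s))~′ = jdt(T̃_s′), where jdt(T_s) is regarded as a tableau of content s₂⋯s_m s₁ and ~ denotes standardization. -/
/-!
STATEMENT 4: Let `s = s₁⋯s_m` be a sign string with `s₁ = +`, and let `T_s` be a
semistandard Young tableau of content `s` (rectangular shape `(3,…,3) ⊢ 3n`).  Then the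
conjugate of the standardization of the promoted tableau equals the promotion of the
conjugate of the standardization: `(jdt(T_s))~′ = jdt(T̃_s′)`, where `jdt(T_s)` is
regarded as a tableau of content `s₂⋯s_m s₁`.

Encodings:
* A sign string is encoded as `s : ℕ → Bool` (`s i = true` meaning `s_i = −`), with
  only the positions `1, …, m` relevant; the multiplicity of the value `i` is `2` for a
  minus and `1` for a plus.
* A filling of the `n × 3` rectangle (shape `(3,…,3) ⊢ 3n`) is a function
  `f : ℕ × ℕ → ℕ` on cells `(row, column)`, relevant on `Rect n = range n ×ˢ range 3`;
  its conjugate, a filling of `RectT n = range 3 ×ˢ range n` (shape `(n,n,n)`), is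
  `p ↦ f (p.2, p.1)`.
* The standardization relabels the entries by `1, …, 3n` in increasing order of value,
  a doubled value receiving consecutive labels with the smaller label in the box whose
  column is further left.
* Jeu-de-taquin promotion is implemented literally as in the paper; for the
  standard tableau `T̃_s′` of shape `(n,n,n) ⊢ 3n` one takes `ℓ = 3n`.
-/

/-- The cell directly below `p`. -/
def below (p : ℕ × ℕ) : ℕ × ℕ := (p.1 + 1, p.2)

/-- The cell directly to the right of `p`. -/
def rightOf (p : ℕ × ℕ) : ℕ × ℕ := (p.1, p.2 + 1)

/-- Slide the empty box located at `p` through the region `R` with entries `f`,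
following the jeu-de-taquin rule, until it reaches an outer corner, which is then
removed from the region. -/
def slide : ℕ → Finset (ℕ × ℕ) → ((ℕ × ℕ) → ℕ) → ℕ × ℕ →
    Finset (ℕ × ℕ) × ((ℕ × ℕ) → ℕ)
  | 0, R, f, p => (R.erase p, f)
  | fuel + 1, R, f, p =>
    if below p ∈ R ∧ rightOf p ∈ R then
      (if f (below p) ≤ f (rightOf p) then
        slide fuel R (Function.update f p (f (below p))) (below p)
      else
        slide fuel R (Function.update f p (f (rightOf p))) (rightOf p))
    else if below p ∈ R then
      slide fuel R (Function.update f p (f (below p))) (below p)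
    else if rightOf p ∈ R then
      slide fuel R (Function.update f p (f (rightOf p))) (rightOf p)
    else
      (R.erase p, f)

/-- One removal-and-slide pass: remove the entry `1` in the top-left corner `(0,0)` and
slide the resulting empty box out of the tableau. -/
def onePass (Rf : Finset (ℕ × ℕ) × ((ℕ × ℕ) → ℕ)) :
    Finset (ℕ × ℕ) × ((ℕ × ℕ) → ℕ) :=
  slide (Rf.1.card + 1) Rf.1 Rf.2 (0, 0)

/-- Jeu-de-taquin promotion of the filling `f` of the region `R` with entries in
`{1,…,ℓ}`: one removal-and-slide pass for each occurrence of the entry `1`, then all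
entries are decremented by `1` and every vacated box is filled with `ℓ`. -/
def promote (R : Finset (ℕ × ℕ)) (f : (ℕ × ℕ) → ℕ) (ℓ : ℕ) : (ℕ × ℕ) → ℕ :=
  let Rf := onePass^[(R.filter (fun p => f p = 1)).card] (R, f)
  fun p => if p ∈ Rf.1 then Rf.2 p - 1 else if p ∈ R then ℓ else 0

/-- The multiplicity of the value `v` prescribed by the sign string `s`:
`2` for a minus (`s v = true`), `1` for a plus. -/
def multOf (s : ℕ → Bool) (v : ℕ) : ℕ := if s v then 2 else 1

/-- The cells of the rectangle with `n` rows of length 3 (shape `(3,…,3) ⊢ 3n`). -/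
def Rect (n : ℕ) : Finset (ℕ × ℕ) := Finset.range n ×ˢ Finset.range 3

/-- The cells of the rectangle with 3 rows of length `n` (shape `(n,n,n) ⊢ 3n`). -/
def RectT (n : ℕ) : Finset (ℕ × ℕ) := Finset.range 3 ×ˢ Finset.range n

/-- `f` is a semistandard Young tableau on the region `R` of content given by the sign
string `s` of length `m`: rows weakly increase, columns strictly increase, entries lie
in `{1, …, m}` and the value `v` occurs exactly `multOf s v` times. -/
def IsTableauOfContent (R : Finset (ℕ × ℕ)) (m : ℕ) (s : ℕ → Bool)
    (f : (ℕ × ℕ) → ℕ) : Prop :=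
  (∀ p ∈ R, rightOf p ∈ R → f p ≤ f (rightOf p)) ∧
  (∀ p ∈ R, below p ∈ R → f p < f (below p)) ∧
  (∀ p ∈ R, 1 ≤ f p ∧ f p ≤ m) ∧
  (∀ v, 1 ≤ v → v ≤ m → (R.filter (fun p => f p = v)).card = multOf s v)

/-- The standardization of a filling `f` of the region `R` of content `s`: the entries
are relabeled by `1, 2, 3, …` in increasing order of value, the two occurrences of a
doubled value receiving consecutive labels with the smaller label placed in the box
whose column is further left. -/
def standardize (R : Finset (ℕ × ℕ)) (s : ℕ → Bool) (f : (ℕ × ℕ) → ℕ) :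
    (ℕ × ℕ) → ℕ :=
  fun p =>
    if p ∈ R then
      (∑ u ∈ Finset.Icc 1 (f p - 1), multOf s u) +
        (if ∃ q ∈ R, f q = f p ∧ q.2 < p.2 then 2 else 1)
    else 0

/-- The sign string `s₂ ⋯ s_m s₁` obtained from `s₁ ⋯ s_m` by cyclic shift. -/
def shiftS (m : ℕ) (s : ℕ → Bool) : ℕ → Bool :=
  fun v => if v = m then s 1 else s (v + 1)

/-!
Since `s₁ = +`, the entry `1` occurs only in the corner `(0,0)`, so both promotions consist of a
single slide followed by relabelling. Standardization is a strictly order-preserving relabelling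
in which equal entries are ordered by column, so the slide in `T_s` and the slide in `T̃_s′`
compare corresponding pairs of entries and follow transposed paths. In a tie between the two
neighbours of the empty box, `T_s` moves down, and the lower neighbour, lying further left, has
the smaller label, so `T̃_s′` moves right. During the slides the second filling stays the
conjugate standardization of the first (`SlideState`). At the end, decrementing the entries and
shifting the content to `s₂⋯s_m s₁` lowers every label by one, while the vacated corner receives
the largest label `3n` on both sides.
-/

open Finset Function

def rect (a b : ℕ) : Finset (ℕ × ℕ) := range a ×ˢ range b

@[simp] lemma mem_rect {a b : ℕ} {q : ℕ × ℕ} : q ∈ rect a b ↔ q.1 < a ∧ q.2 < b := by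
  simp [rect]

lemma swap_mem_rect {a b : ℕ} {q : ℕ × ℕ} : q.swap ∈ rect b a ↔ q ∈ rect a b := by
  simp [and_comm]

lemma below_ne (p : ℕ × ℕ) : below p ≠ p := by
  simp [below, Prod.ext_iff]

lemma rightOf_ne (p : ℕ × ℕ) : rightOf p ≠ p := by
  simp [rightOf, Prod.ext_iff]

lemma card_rect (a b : ℕ) : #(rect a b) = a * b := by
  simp [rect]

/-- Semistandardness compared between any two cells rather than between neighbours: unlike the
neighbour conditions, it survives removing a cell from `R`. -/
def IsSemistandardOn (R : Finset (ℕ × ℕ)) (f : ℕ × ℕ → ℕ) : Prop :=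
  ∀ q ∈ R, ∀ r ∈ R, q.1 ≤ r.1 → q.2 ≤ r.2 → f q ≤ f r ∧ (q.1 < r.1 → f q < f r)

namespace IsSemistandardOn

variable {R S : Finset (ℕ × ℕ)} {f : ℕ × ℕ → ℕ}

lemma mono (h : IsSemistandardOn R f) (hSR : S ⊆ R) : IsSemistandardOn S f :=
  fun q hq r hr => h q (hSR hq) r (hSR hr)

lemma ne_of_snd_eq (h : IsSemistandardOn R f) {q r : ℕ × ℕ} (hq : q ∈ R) (hr : r ∈ R)
    (hne : q ≠ r) (hcol : q.2 = r.2) : f q ≠ f r := by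
  rcases lt_or_gt_of_ne (fun h1 => hne (Prod.ext h1 hcol)) with hlt | hlt
  · exact ((h q hq r hr hlt.le hcol.le).2 hlt).ne
  · exact ((h r hr q hq hlt.le hcol.ge).2 hlt).ne'

lemma of_erase {p : ℕ × ℕ} (h : IsSemistandardOn (R.erase p) f) (q : ℕ × ℕ) (hq : q ∈ R)
    (r : ℕ × ℕ) (hr : r ∈ R) (hqp : q ≠ p) (hrp : r ≠ p) (h1 : q.1 ≤ r.1) (h2 : q.2 ≤ r.2) :
    f q ≤ f r ∧ (q.1 < r.1 → f q < f r) :=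
  h q (mem_erase.2 ⟨hqp, hq⟩) r (mem_erase.2 ⟨hrp, hr⟩) h1 h2

end IsSemistandardOn

lemma isSemistandardOn_rect {a b : ℕ} {f : ℕ × ℕ → ℕ}
    (hrow : ∀ p ∈ rect a b, rightOf p ∈ rect a b → f p ≤ f (rightOf p))
    (hcol : ∀ p ∈ rect a b, below p ∈ rect a b → f p < f (below p)) :
    IsSemistandardOn (rect a b) f := by
  intro q hq r hr h1 h2
  rw [mem_rect] at hq hr
  have hrowMono : MonotoneOn (fun j => f (q.1, j)) (Set.Iio b) :=
    monotoneOn_of_le_succ Set.ordConnected_Iio fun j _ _ hj1 => by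
      rw [Set.mem_Iio, Order.succ_eq_add_one] at hj1
      simpa [rightOf] using hrow (q.1, j) (by simp [hq.1]; omega) (by simp [rightOf, hq.1, hj1])
  have hcolMono : StrictMonoOn (fun i => f (i, r.2)) (Set.Iio a) :=
    strictMonoOn_of_lt_succ Set.ordConnected_Iio fun i _ _ hi1 => by
      rw [Set.mem_Iio, Order.succ_eq_add_one] at hi1
      simpa [below] using hcol (i, r.2) (by simp [hr.2]; omega) (by simp [below, hi1, hr.2])
  have hq_le : f q ≤ f (q.1, r.2) := hrowMono hq.2 hr.2 h2
  refine ⟨hq_le.trans (hcolMono.monotoneOn hq.1 hr.1 h1), fun hlt => ?_⟩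
  exact hq_le.trans_lt (hcolMono hq.1 hr.1 hlt)

section Move

variable {a b : ℕ} {f : ℕ × ℕ → ℕ}

lemma IsSemistandardOn.update_below {p : ℕ × ℕ}
    (h : IsSemistandardOn ((rect a b).erase p) f) (hb : below p ∈ rect a b)
    (hle : rightOf p ∈ rect a b → f (below p) ≤ f (rightOf p)) :
    IsSemistandardOn ((rect a b).erase (below p)) (update f p (f (below p))) := by
  obtain ⟨i, j⟩ := p
  simp only [below, rightOf, mem_rect] at hb hle ⊢
  intro ⟨x, y⟩ hq ⟨x', y'⟩ hr h1 h2
  simp only [mem_erase, ne_eq, Prod.mk.injEq, mem_rect] at hq hr h1 h2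
  by_cases hqp : x = i ∧ y = j
  · obtain ⟨rfl, rfl⟩ := hqp
    by_cases hrp : x' = x ∧ y' = y
    · obtain ⟨rfl, rfl⟩ := hrp
      simp
    rw [update_self, update_of_ne (by simpa using hrp)]
    by_cases hy : y + 1 ≤ y'
    · have hright := h.of_erase (x, y + 1) (by simp; omega) (x', y') (by simp; omega) (by simp)
        (by simpa using hrp) h1 hy
      have := hle (by omega)
      exact ⟨by omega, fun hx => by have := hright.2 hx; omega⟩
    · have hdown := h.of_erase (x + 1, y) (by simp; omega) (x', y') (by simp; omega) (by simp)
        (by simpa using hrp) (by omega) h2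
      exact ⟨hdown.1, fun _ => hdown.2 (by omega)⟩
  · rw [update_of_ne (by simpa using hqp)]
    by_cases hrp : x' = i ∧ y' = j
    · obtain ⟨rfl, rfl⟩ := hrp
      rw [update_self]
      have hdown := h.of_erase (x, y) (by simp; omega) (x' + 1, y') (by simp; omega)
        (by simpa using hqp) (by simp) (by omega) h2
      exact ⟨(hdown.2 (by simp; omega)).le, fun _ => hdown.2 (by simp; omega)⟩
    · rw [update_of_ne (by simpa using hrp)]
      exact h.of_erase (x, y) (by simp; omega) (x', y') (by simp; omega) (by simpa using hqp)
        (by simpa using hrp) h1 h2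

lemma IsSemistandardOn.update_rightOf {p : ℕ × ℕ}
    (h : IsSemistandardOn ((rect a b).erase p) f) (hr : rightOf p ∈ rect a b)
    (hlt : below p ∈ rect a b → f (rightOf p) < f (below p)) :
    IsSemistandardOn ((rect a b).erase (rightOf p)) (update f p (f (rightOf p))) := by
  obtain ⟨i, j⟩ := p
  simp only [below, rightOf, mem_rect] at hr hlt ⊢
  intro ⟨x, y⟩ hq ⟨x', y'⟩ hr' h1 h2
  simp only [mem_erase, ne_eq, Prod.mk.injEq, mem_rect] at hq hr' h1 h2
  by_cases hqp : x = i ∧ y = j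
  · obtain ⟨rfl, rfl⟩ := hqp
    by_cases hrp : x' = x ∧ y' = y
    · obtain ⟨rfl, rfl⟩ := hrp
      simp
    rw [update_self, update_of_ne (by simpa using hrp)]
    by_cases hy : y + 1 ≤ y'
    · exact h.of_erase (x, y + 1) (by simp; omega) (x', y') (by simp; omega) (by simp)
        (by simpa using hrp) h1 hy
    · have hdown := h.of_erase (x + 1, y) (by simp; omega) (x', y') (by simp; omega) (by simp)
        (by simpa using hrp) (by omega) h2
      have := hlt (by omega)
      exact ⟨by omega, fun _ => by omega⟩
  · rw [update_of_ne (by simpa using hqp)]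
    by_cases hrp : x' = i ∧ y' = j
    · obtain ⟨rfl, rfl⟩ := hrp
      rw [update_self]
      exact h.of_erase (x, y) (by simp; omega) (x', y' + 1) (by simp; omega) (by simpa using hqp)
        (by simp) h1 (by simp; omega)
    · rw [update_of_ne (by simpa using hrp)]
      exact h.of_erase (x, y) (by simp; omega) (x', y') (by simp; omega) (by simpa using hqp)
        (by simpa using hrp) h1 h2

end Move

/-- The number of labels taken by the values `1, …, v - 1` in the standardization. -/
def labelOffset (s : ℕ → Bool) (v : ℕ) : ℕ := ∑ u ∈ Icc 1 (v - 1), multOf s u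

/-- `2` for the right-hand copy of a doubled value, `1` otherwise. -/
def tieBit (R : Finset (ℕ × ℕ)) (f : ℕ × ℕ → ℕ) (q : ℕ × ℕ) : ℕ :=
  if ∃ q' ∈ R, f q' = f q ∧ q'.2 < q.2 then 2 else 1

def stdLabel (R : Finset (ℕ × ℕ)) (s : ℕ → Bool) (f : ℕ × ℕ → ℕ) (q : ℕ × ℕ) : ℕ :=
  labelOffset s (f q) + tieBit R f q

section Labels

variable {R : Finset (ℕ × ℕ)} {s : ℕ → Bool} {f : ℕ × ℕ → ℕ} {q r : ℕ × ℕ}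

lemma standardize_of_mem (hq : q ∈ R) : standardize R s f q = stdLabel R s f q :=
  if_pos hq

lemma multOf_pos (s : ℕ → Bool) (v : ℕ) : 0 < multOf s v := by
  unfold multOf; split <;> omega

lemma multOf_le_two (s : ℕ → Bool) (v : ℕ) : multOf s v ≤ 2 := by
  unfold multOf; split <;> omega

lemma labelOffset_succ {v : ℕ} (hv : 1 ≤ v) :
    labelOffset s (v + 1) = labelOffset s v + multOf s v := by
  obtain ⟨w, rfl⟩ := Nat.exists_eq_add_of_le' hv
  simp [labelOffset, Finset.sum_Icc_succ_top]

lemma labelOffset_mono : Monotone (labelOffset s) := fun _ _ h =>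
  Finset.sum_le_sum_of_subset (Finset.Icc_subset_Icc_right (by omega))

lemma labelOffset_shiftS {m v : ℕ} (h2 : 2 ≤ v) (hv : v ≤ m + 1) :
    labelOffset (shiftS m s) (v - 1) + multOf s 1 = labelOffset s v := by
  induction v, h2 using Nat.le_induction with
  | base => simp [labelOffset]
  | succ v h2 ih =>
    have hshift : multOf (shiftS m s) (v - 1) = multOf s v := by
      simp [multOf, shiftS, show v - 1 ≠ m by omega, show v - 1 + 1 = v by omega]
    rw [labelOffset_succ (by omega), ← ih (by omega), show v + 1 - 1 = v - 1 + 1 by omega,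
      labelOffset_succ (by omega), hshift]
    ring

lemma two_le_stdLabel (h : 2 ≤ f q) : 2 ≤ stdLabel R s f q := by
  have h1 : multOf s 1 ≤ labelOffset s (f q) := by
    simpa [labelOffset] using labelOffset_mono (s := s) h
  have := multOf_pos s 1
  unfold stdLabel tieBit
  split <;> omega

lemma tieBit_le_multOf (hcard : #(R.filter (f · = f q)) ≤ multOf s (f q)) (hq : q ∈ R) :
    tieBit R f q ≤ multOf s (f q) := by
  unfold tieBit
  split
  · next h =>
    obtain ⟨q', hq', hfq', hlt⟩ := h
    have : 1 < #(R.filter (f · = f q)) :=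
      one_lt_card.2 ⟨q', by simp [hq', hfq'], q, by simp [hq], fun h => by simp [h] at hlt⟩
    omega
  · exact multOf_pos s _

lemma stdLabel_lt_of_lt (hcard : ∀ v, #(R.filter (f · = v)) ≤ multOf s v) (hq : q ∈ R)
    (hq1 : 1 ≤ f q) (h : f q < f r) : stdLabel R s f q < stdLabel R s f r := by
  have hq_le := tieBit_le_multOf (hcard (f q)) hq
  have hoff : labelOffset s (f q) + multOf s (f q) ≤ labelOffset s (f r) := by
    rw [← labelOffset_succ hq1]; exact labelOffset_mono h
  have : 1 ≤ tieBit R f r := by unfold tieBit; split <;> omega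
  unfold stdLabel
  omega

lemma stdLabel_lt_of_eq (hcard : ∀ v, #(R.filter (f · = v)) ≤ multOf s v) (hq : q ∈ R)
    (hr : r ∈ R) (h : f q = f r) (hcol : q.2 < r.2) : stdLabel R s f q < stdLabel R s f r := by
  have hq1 : tieBit R f q = 1 := by
    refine if_neg fun ⟨q', hq', hfq', hlt⟩ => ?_
    have : 2 < #(R.filter (f · = f q)) :=
      two_lt_card.2 ⟨q', by simp [hq', hfq'], q, by simp [hq], r, by simp [hr, h],
        fun h => by simp [h] at hlt, fun h => by rw [h] at hlt; omega,
        fun h => by rw [h] at hcol; omega⟩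
    have := hcard (f q)
    have := multOf_le_two s (f q)
    omega
  have hr2 : tieBit R f r = 2 := if_pos ⟨q, hq, h, hcol⟩
  simp [stdLabel, hq1, hr2, h]

lemma tieBit_erase {p : ℕ × ℕ} (h : f p ≠ f q) : tieBit (R.erase p) f q = tieBit R f q := by
  have : (∃ q' ∈ R.erase p, f q' = f q ∧ q'.2 < q.2) ↔ ∃ q' ∈ R, f q' = f q ∧ q'.2 < q.2 :=
    ⟨fun ⟨q', hq', hf⟩ => ⟨q', mem_of_mem_erase hq', hf⟩,
      fun ⟨q', hq', hf⟩ => ⟨q', mem_erase.2 ⟨fun h' => h (h' ▸ hf.1), hq'⟩, hf⟩⟩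
  simp only [tieBit, this]

lemma tieBit_congr {f' : ℕ × ℕ → ℕ} (h : ∀ r ∈ R, f r = f q ↔ f' r = f' q) :
    tieBit R f q = tieBit R f' q := by
  have : (∃ r ∈ R, f r = f q ∧ r.2 < q.2) ↔ ∃ r ∈ R, f' r = f' q ∧ r.2 < q.2 :=
    exists_congr fun r => and_congr_right fun hr => and_congr_left' (h r hr)
  simp only [tieBit, this]

section Perm

variable {R₁ R₂ : Finset (ℕ × ℕ)} {f₁ f₂ : ℕ × ℕ → ℕ} (e : Equiv.Perm (ℕ × ℕ))

lemma card_filter_eq_of_perm (he : ∀ q, e q ∈ R₂ ↔ q ∈ R₁) (hf : ∀ q ∈ R₁, f₁ q = f₂ (e q))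
    (v : ℕ) : #(R₁.filter (f₁ · = v)) = #(R₂.filter (f₂ · = v)) :=
  card_nbij' e e.symm (fun q hq => by simp_all) (fun r hr => by simp_all [← he])
    (fun q _ => by simp) (fun r _ => by simp)

lemma tieBit_eq_of_perm (he : ∀ q, e q ∈ R₂ ↔ q ∈ R₁) (hf : ∀ q ∈ R₁, f₁ q = f₂ (e q))
    (hcol : ∀ q ∈ R₁, ∀ q' ∈ R₁, f₁ q' = f₁ q → (q'.2 < q.2 ↔ (e q').2 < (e q).2))
    (hq : q ∈ R₁) : tieBit R₁ f₁ q = tieBit R₂ f₂ (e q) := by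
  have : (∃ q' ∈ R₁, f₁ q' = f₁ q ∧ q'.2 < q.2) ↔
      ∃ r ∈ R₂, f₂ r = f₂ (e q) ∧ r.2 < (e q).2 := by
    constructor
    · rintro ⟨q', hq', hfq', hlt⟩
      exact ⟨e q', (he q').2 hq', by rw [← hf q' hq', ← hf q hq, hfq'],
        (hcol q hq q' hq' hfq').1 hlt⟩
    · rintro ⟨r, hr, hfr, hlt⟩
      have hr' : e.symm r ∈ R₁ := (he _).1 (by simpa using hr)
      have hfr' : f₁ (e.symm r) = f₁ q := by rw [hf _ hr', hf q hq]; simpa using hfr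
      exact ⟨e.symm r, hr', hfr', (hcol q hq _ hr' hfr').2 (by simpa using hlt)⟩
  simp only [tieBit, this]

end Perm

end Labels

section Slide

variable {R : Finset (ℕ × ℕ)} {f : ℕ × ℕ → ℕ} {p : ℕ × ℕ} {k : ℕ}

lemma slide_succ_below (hb : below p ∈ R)
    (hle : rightOf p ∈ R → f (below p) ≤ f (rightOf p)) :
    slide (k + 1) R f p = slide k R (update f p (f (below p))) (below p) := by
  by_cases hr : rightOf p ∈ R <;> simp [slide, hb, hr, hle]

lemma slide_succ_rightOf (hr : rightOf p ∈ R)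
    (hlt : below p ∈ R → f (rightOf p) < f (below p)) :
    slide (k + 1) R f p = slide k R (update f p (f (rightOf p))) (rightOf p) := by
  by_cases hb : below p ∈ R
  · simp [slide, hb, hr, hlt hb]
  · simp [slide, hb, hr]

lemma slide_succ_of_notMem (hb : below p ∉ R) (hr : rightOf p ∉ R) :
    slide (k + 1) R f p = (R.erase p, f) := by
  simp [slide, hb, hr]

end Slide

lemma swap_apply_mem_erase_iff {R : Finset (ℕ × ℕ)} {p p₁ : ℕ × ℕ} (hp : p ∈ R) (hp₁ : p₁ ∈ R)
    (q : ℕ × ℕ) :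
    Equiv.swap p p₁ q ∈ R.erase p ↔ q ∈ R.erase p₁ := by
  rcases eq_or_ne q p with rfl | hqp
  · by_cases h : q = p₁ <;> simp_all [eq_comm]
  rcases eq_or_ne q p₁ with rfl | hqp₁
  · simp_all [eq_comm]
  · simp [Equiv.swap_apply_of_ne_of_ne hqp hqp₁, hqp, hqp₁]

/-- An intermediate state of the slides in `f` (empty box at `p`) and in `g` (empty box at
`p.swap`): `g` is the conjugate of the standardization of `f` with the empty box left out. -/
structure SlideState (a b m : ℕ) (s : ℕ → Bool) (f g : ℕ × ℕ → ℕ) (p : ℕ × ℕ) : Prop where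
  mem : p ∈ rect a b
  semistandard : IsSemistandardOn ((rect a b).erase p) f
  bounds : ∀ q ∈ (rect a b).erase p, 2 ≤ f q ∧ f q ≤ m
  card_le : ∀ v, #(((rect a b).erase p).filter (f · = v)) ≤ multOf s v
  label : ∀ q ∈ (rect a b).erase p, g q.swap = stdLabel ((rect a b).erase p) s f q

namespace SlideState

variable {a b m : ℕ} {s : ℕ → Bool} {f g : ℕ × ℕ → ℕ} {p : ℕ × ℕ}

/-- Moving the entry of the neighbour `p₁` into the empty box: `f` and `g` change by the same
transposition of cells, and the labels are unchanged since equal entries keep the relative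
order of their columns. -/
lemma move (I : SlideState a b m s f g p) {p₁ : ℕ × ℕ} (hp₁ : p₁ ∈ rect a b)
    (hcol₁ : p₁.2 = p.2 ∨ p₁.2 = p.2 + 1) (hne : p₁ ≠ p)
    (hss : IsSemistandardOn ((rect a b).erase p₁) (update f p (f p₁))) :
    SlideState a b m s (update f p (f p₁)) (update g p.swap (g p₁.swap)) p₁ := by
  set e := Equiv.swap p p₁
  have he := swap_apply_mem_erase_iff I.mem hp₁
  have he_apply : ∀ q ∈ (rect a b).erase p₁, e q = if q = p then p₁ else q := by
    intro q hq
    split_ifs with h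
    · simp [e, h]
    · exact Equiv.swap_apply_of_ne_of_ne h (ne_of_mem_erase hq)
  have hf : ∀ q ∈ (rect a b).erase p₁, update f p (f p₁) q = f (e q) := by
    intro q hq
    rw [he_apply q hq, update_apply]
    split_ifs <;> rfl
  have hcol : ∀ q ∈ (rect a b).erase p₁, ∀ q' ∈ (rect a b).erase p₁,
      update f p (f p₁) q' = update f p (f p₁) q → (q'.2 < q.2 ↔ (e q').2 < (e q).2) := by
    intro q hq q' hq' hfq
    rw [he_apply q hq, he_apply q' hq']
    have hpR : p ∈ (rect a b).erase p₁ := mem_erase.2 ⟨hne.symm, I.mem⟩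
    by_cases hq'p : q' = p <;> by_cases hqp : q = p <;> simp only [hq'p, hqp, if_true, if_false]
    · simp
    · subst hq'p
      have : q.2 ≠ p₁.2 := fun h => I.semistandard.ne_of_snd_eq
        (mem_erase.2 ⟨hqp, mem_of_mem_erase hq⟩) (mem_erase.2 ⟨hne, hp₁⟩) (ne_of_mem_erase hq) h
        (by simpa [hqp] using hfq.symm)
      omega
    · subst hqp
      have : q'.2 ≠ q.2 := fun h => hss.ne_of_snd_eq hq' hpR hq'p h hfq
      omega
  refine ⟨hp₁, hss, fun q hq => hf q hq ▸ I.bounds _ ((he q).2 hq),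
    fun v => (card_filter_eq_of_perm e he hf v).trans_le (I.card_le v), fun q hq => ?_⟩
  have hg : update g p.swap (g p₁.swap) q.swap = g (e q).swap := by
    rw [he_apply q hq]
    split_ifs with h
    · simp [h]
    · exact update_of_ne (fun h' => h (Prod.swap_injective h')) _ _
  rw [hg, I.label _ ((he q).2 hq), stdLabel, stdLabel, hf q hq, tieBit_eq_of_perm e he hf hcol hq]

/-- The slide in `f` moves down exactly when the slide in `g` moves right: a tie between the two
neighbours gives the smaller label to the lower one, which lies in the column further left. -/
lemma le_iff_label_lt (I : SlideState a b m s f g p) (hb : below p ∈ rect a b)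
    (hr : rightOf p ∈ rect a b) :
    f (below p) ≤ f (rightOf p) ↔ g (below p).swap < g (rightOf p).swap := by
  have hb' : below p ∈ (rect a b).erase p := mem_erase.2 ⟨below_ne p, hb⟩
  have hr' : rightOf p ∈ (rect a b).erase p := mem_erase.2 ⟨rightOf_ne p, hr⟩
  rw [I.label _ hb', I.label _ hr']
  constructor
  · intro h
    rcases h.lt_or_eq with h | h
    · exact stdLabel_lt_of_lt I.card_le hb' (one_le_two.trans (I.bounds _ hb').1) h
    · exact stdLabel_lt_of_eq I.card_le hb' hr' h (by simp [below, rightOf])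
  · intro h
    by_contra hlt
    exact (stdLabel_lt_of_lt I.card_le hr' (one_le_two.trans (I.bounds _ hr').1)
      (not_le.1 hlt)).not_gt h

lemma slide_swap (k : ℕ) {f g : ℕ × ℕ → ℕ} {p : ℕ × ℕ} (I : SlideState a b m s f g p) :
    ∃ c f' g', slide k (rect a b) f p = ((rect a b).erase c, f') ∧
      slide k (rect b a) g p.swap = ((rect b a).erase c.swap, g') ∧
      SlideState a b m s f' g' c := by
  induction k generalizing f g p with
  | zero => exact ⟨p, f, g, rfl, rfl, I⟩
  | succ k ih =>
    by_cases hdown : below p ∈ rect a b ∧ (rightOf p ∈ rect a b → f (below p) ≤ f (rightOf p))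
    · obtain ⟨hb, hle⟩ := hdown
      obtain ⟨c, f', g', hf, hg, I'⟩ := ih (I.move hb (Or.inl rfl) (below_ne p)
        (I.semistandard.update_below hb hle))
      refine ⟨c, f', g', by rw [slide_succ_below hb hle, hf], ?_, I'⟩
      rw [slide_succ_rightOf (swap_mem_rect.2 hb)
        fun hr => (I.le_iff_label_lt hb (swap_mem_rect.1 hr)).1 (hle (swap_mem_rect.1 hr))]
      exact hg
    by_cases hright : rightOf p ∈ rect a b ∧ (below p ∈ rect a b → f (rightOf p) < f (below p))
    · obtain ⟨hr, hlt⟩ := hright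
      obtain ⟨c, f', g', hf, hg, I'⟩ := ih (I.move hr (Or.inr rfl) (rightOf_ne p)
        (I.semistandard.update_rightOf hr hlt))
      refine ⟨c, f', g', by rw [slide_succ_rightOf hr hlt, hf], ?_, I'⟩
      rw [slide_succ_below (swap_mem_rect.2 hr) fun hb => not_lt.1 fun h =>
        (not_le.2 (hlt (swap_mem_rect.1 hb))) ((I.le_iff_label_lt (swap_mem_rect.1 hb) hr).2 h)]
      exact hg
    have hb : below p ∉ rect a b := fun hb =>
      hright ⟨by_contra fun hr => hdown ⟨hb, fun h => absurd h hr⟩,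
        fun _ => not_le.1 fun h => hdown ⟨hb, fun _ => h⟩⟩
    have hr : rightOf p ∉ rect a b := fun hr => hright ⟨hr, fun h => absurd h hb⟩
    refine ⟨p, f, g, slide_succ_of_notMem hb hr, slide_succ_of_notMem ?_ ?_, I⟩
    · exact fun h => hr (swap_mem_rect.1 h)
    · exact fun h => hb (swap_mem_rect.1 h)

end SlideState

lemma labelOffset_eq_card {R : Finset (ℕ × ℕ)} {m : ℕ} {s : ℕ → Bool} {f : ℕ × ℕ → ℕ}
    (hT : IsTableauOfContent R m s f) : labelOffset s (m + 1) = #R := by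
  obtain ⟨-, -, hrange, hcount⟩ := hT
  rw [card_eq_sum_card_fiberwise fun q hq => mem_Icc.2 (hrange q hq), labelOffset,
    Nat.add_sub_cancel]
  exact sum_congr rfl fun v hv => (hcount v (mem_Icc.1 hv).1 (mem_Icc.1 hv).2).symm

lemma filter_eq_one_eq_singleton {a b m : ℕ} {s : ℕ → Bool} {f : ℕ × ℕ → ℕ}
    (hT : IsTableauOfContent (rect a b) m s f) (hm : 1 ≤ m) (hs1 : s 1 = false) :
    (rect a b).filter (f · = 1) = {(0, 0)} := by
  obtain ⟨hrow, hcol, hrange, hcount⟩ := hT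
  obtain ⟨q, hq⟩ := card_eq_one.1 (by simpa [multOf, hs1] using hcount 1 le_rfl hm)
  obtain ⟨hqR, hq1⟩ := mem_filter.1 (hq ▸ mem_singleton_self q)
  have h0 : ((0, 0) : ℕ × ℕ) ∈ rect a b := by simp at hqR ⊢; omega
  have h01 : f (0, 0) = 1 := by
    have := ((isSemistandardOn_rect hrow hcol) _ h0 q hqR (Nat.zero_le _) (Nat.zero_le _)).1
    have := (hrange _ h0).1
    omega
  rwa [hq, singleton_inj, eq_comm, ← mem_singleton, ← hq, mem_filter, and_iff_right h0]

lemma standardize_origin {a b : ℕ} {s : ℕ → Bool} {f : ℕ × ℕ → ℕ}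
    (h1 : (rect a b).filter (f · = 1) = {(0, 0)}) : standardize (rect a b) s f (0, 0) = 1 := by
  have h0 : ((0, 0) : ℕ × ℕ) ∈ (rect a b).filter (f · = 1) := h1 ▸ mem_singleton_self _
  rw [mem_filter] at h0
  simp [standardize_of_mem h0.1, stdLabel, tieBit, labelOffset, h0.2]

namespace SlideState

variable {a b m : ℕ} {s : ℕ → Bool} {f g : ℕ × ℕ → ℕ}

lemma init (hT : IsTableauOfContent (rect a b) m s f)
    (h1 : (rect a b).filter (f · = 1) = {(0, 0)}) :
    SlideState a b m s f (fun q => standardize (rect a b) s f q.swap) (0, 0) := by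
  obtain ⟨hrow, hcol, hrange, hcount⟩ := hT
  have hne : ∀ q ∈ (rect a b).erase (0, 0), f q ≠ 1 := fun q hq h =>
    ne_of_mem_erase hq (mem_singleton.1 (h1 ▸ mem_filter.2 ⟨mem_of_mem_erase hq, h⟩))
  have h0 : ((0, 0) : ℕ × ℕ) ∈ (rect a b).filter (f · = 1) := h1 ▸ mem_singleton_self _
  have h01 : f (0, 0) = 1 := (mem_filter.1 h0).2
  refine ⟨(mem_filter.1 h0).1,
    (isSemistandardOn_rect hrow hcol).mono (erase_subset _ _), fun q hq => ?_, fun v => ?_,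
    fun q hq => ?_⟩
  · have := hrange q (mem_of_mem_erase hq)
    have := hne q hq
    omega
  · by_cases hv : 1 ≤ v ∧ v ≤ m
    · exact (card_le_card (filter_subset_filter _ (erase_subset _ _))).trans
        (hcount v hv.1 hv.2).le
    · rw [card_eq_zero.2 (filter_eq_empty_iff.2 fun q hq (h : f q = v) => hv (h ▸ hrange q
        (mem_of_mem_erase hq)))]
      exact Nat.zero_le _
  · rw [Prod.swap_swap, standardize_of_mem (mem_of_mem_erase hq), stdLabel, stdLabel,
      tieBit_erase (h01.trans_ne (hne q hq).symm)]

lemma filter_eq_one (I : SlideState a b m s f g (0, 0)) (h0 : g (0, 0) = 1) :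
    (rect b a).filter (g · = 1) = {(0, 0)} := by
  ext r
  simp only [mem_filter, mem_singleton]
  constructor
  · rintro ⟨hr, hr1⟩
    by_contra hr0
    have hmem : r.swap ∈ (rect a b).erase (0, 0) :=
      mem_erase.2 ⟨fun h => hr0 (by simpa using congrArg Prod.swap h), swap_mem_rect.1 hr⟩
    have := two_le_stdLabel (R := (rect a b).erase (0, 0)) (s := s) (I.bounds _ hmem).1
    rw [← I.label _ hmem, Prod.swap_swap, hr1] at this
    omega
  · rintro rfl
    exact ⟨swap_mem_rect.2 I.mem, h0⟩

end SlideState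

lemma promote_eq_of_onePass {R : Finset (ℕ × ℕ)} {f f' : ℕ × ℕ → ℕ} {c : ℕ × ℕ} (ℓ : ℕ)
    (h1 : #(R.filter (f · = 1)) = 1) (hpass : onePass (R, f) = (R.erase c, f')) :
    promote R f ℓ = fun r => if r ∈ R.erase c then f' r - 1 else if r ∈ R then ℓ else 0 := by
  simp only [promote, h1, iterate_one, hpass]

lemma SlideState.standardize_promote {a b m : ℕ} {s : ℕ → Bool} {f g : ℕ × ℕ → ℕ}
    {c : ℕ × ℕ} (I : SlideState a b m s f g c) (hs1 : s 1 = false) (hm : 1 ≤ m)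
    (htotal : labelOffset s (m + 1) = a * b) {q : ℕ × ℕ} (hq : q ∈ rect a b) :
    standardize (rect a b) (shiftS m s)
      (fun r => if r ∈ (rect a b).erase c then f r - 1 else if r ∈ rect a b then m else 0) q =
      if q = c then a * b else g q.swap - 1 := by
  set F := fun r => if r ∈ (rect a b).erase c then f r - 1 else if r ∈ rect a b then m else 0
  have hF : ∀ r ∈ (rect a b).erase c, F r = f r - 1 ∧ F r < m := fun r hr => by
    have := I.bounds r hr
    simp only [F, if_pos hr, true_and]
    omega
  have hFc : F c = m := by simp only [F, notMem_erase, if_false, if_pos I.mem]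
  have hmult : multOf s 1 = 1 := by simp [multOf, hs1]
  rw [standardize_of_mem hq, stdLabel]
  split_ifs with hqc
  · subst hqc
    have htie : tieBit (rect a b) F q = 1 := if_neg fun ⟨r, hr, hFr, hlt⟩ => by
      have := (hF r (mem_erase.2 ⟨fun h => by simp [h] at hlt, hr⟩)).2
      omega
    have := labelOffset_shiftS (s := s) (by omega : 2 ≤ m + 1) le_rfl
    rw [Nat.add_sub_cancel] at this
    rw [htie, hFc]
    omega
  · have hq' : q ∈ (rect a b).erase c := mem_erase.2 ⟨hqc, hq⟩
    have hbq := I.bounds q hq'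
    have htie : tieBit (rect a b) F q = tieBit ((rect a b).erase c) f q := by
      rw [← tieBit_erase (hFc.trans_ne (hF q hq').2.ne'), tieBit_congr]
      intro r hr
      have := I.bounds r hr
      rw [(hF r hr).1, (hF q hq').1]
      omega
    have := labelOffset_shiftS (s := s) hbq.1 (by omega : f q ≤ m + 1)
    rw [htie, (hF q hq').1, I.label q hq', stdLabel]
    omega

/-- If `s₁ = +`, then `(jdt(T_s))~′ = jdt(T̃_s′)`: the conjugate of the standardization
(with respect to the shifted content `s₂⋯s_m s₁`) of the promoted tableau equals the
promotion of the conjugate of the standardization. -/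
theorem jdt_standardization_plus (n m : ℕ) (s : ℕ → Bool) (f : (ℕ × ℕ) → ℕ)
    (hm : 1 ≤ m) (hs1 : s 1 = false)
    (hT : IsTableauOfContent (Rect n) m s f) :
    ∀ p ∈ RectT n,
      standardize (Rect n) (shiftS m s) (promote (Rect n) f m) (p.2, p.1)
        = promote (RectT n) (fun q => standardize (Rect n) s f (q.2, q.1)) (3 * n) p := by
  change IsTableauOfContent (rect n 3) m s f at hT
  change ∀ p ∈ rect 3 n, standardize (rect n 3) (shiftS m s) (promote (rect n 3) f m) p.swap
    = promote (rect 3 n) (fun q => standardize (rect n 3) s f q.swap) (3 * n) p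
  have h1 := filter_eq_one_eq_singleton hT hm hs1
  have I := SlideState.init hT h1
  have hG1 := I.filter_eq_one (standardize_origin h1)
  obtain ⟨c, f', g', hf, hg, I'⟩ := I.slide_swap (#(rect n 3) + 1)
  have hF := promote_eq_of_onePass (R := rect n 3) m (by rw [h1, card_singleton]) hf
  have hG := promote_eq_of_onePass (R := rect 3 n) (3 * n) (by rw [hG1, card_singleton])
    (show onePass (rect 3 n, _) = _ by rw [onePass, card_rect, mul_comm, ← card_rect]; exact hg)
  intro p hp
  rw [hF, hG, I'.standardize_promote hs1 hm ((labelOffset_eq_card hT).trans (card_rect n 3))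
    (swap_mem_rect.2 hp)]
  by_cases hpc : p.swap = c
  · subst hpc
    simp [hp, mul_comm]
  · have : p ≠ c.swap := fun h => hpc (by rw [h, Prod.swap_swap])
    simp [hpc, hp, this]
end

section
/- The left-arc matching of an m-diagram is well-defined: for every standard Young tableau T of shape (n,n,n) with rows R₁, R₂, R₃ and every j ∈ R₂, the set { i ∈ R₁ : i < j and i ≠ L(j′) for all j′ ∈ R₂ with j′ < j } is nonempty, so the greedy rule defines an injective function L : R₂ → R₁ with L(j) < j for all j ∈ R₂. -/
/-!
STATEMENT 10: The left-arc matching of an m-diagram is well-defined: for every standard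
Young tableau `T` of shape `(n,n,n)` with rows `R₁, R₂, R₃` and every `j ∈ R₂`, the set
`{ i ∈ R₁ : i < j and i ≠ L(j') for all j' ∈ R₂ with j' < j }` is nonempty, so the
greedy rule defines an injective function `L : R₂ → R₁` with `L(j) < j` for all
`j ∈ R₂`.
-/

/-- `T` is a standard Young tableau of shape `(n,n,n) ⊢ 3n`: rows and columns strictly
increase and each of the values `1, …, 3n` is used exactly once.  `T r c` is the entry
in row `r`, column `c`. -/
def IsStandardNNN (n : ℕ) (T : Fin 3 → Fin n → ℕ) : Prop :=
  (∀ r : Fin 3, ∀ c c' : Fin n, c < c' → T r c < T r c') ∧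
  (∀ r r' : Fin 3, r < r' → ∀ c : Fin n, T r c < T r' c) ∧
  (∀ (r : Fin 3) (c : Fin n), T r c ∈ Finset.Icc 1 (3 * n)) ∧
  (∀ v, 1 ≤ v → v ≤ 3 * n → ∃! p : Fin 3 × Fin n, T p.1 p.2 = v)

/-- The set of entries of row `r` of `T` (`r = 0, 1, 2` giving `R₁, R₂, R₃`). -/
def rowSet (n : ℕ) (T : Fin 3 → Fin n → ℕ) (r : Fin 3) : Finset ℕ :=
  Finset.univ.image (T r)

/-- The set of elements of `A` already used as matches of the elements of `B`
smaller than `n`, processing the elements of `B` in increasing order greedily. -/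
def usedMatches (A B : Finset ℕ) : ℕ → Finset ℕ
  | 0 => ∅
  | n + 1 =>
    let U := usedMatches A B n
    if n ∈ B then U ∪ {((A \ U).filter (· < n)).sup id} else U

/-- The greedy matching rule of the m-diagram construction: processing the elements
`j` of `B` in increasing order, `greedyMatch A B j` is the largest element of `A`
smaller than `j` not already used as the match of an earlier element of `B`, i.e.
`greedyMatch A B j = max { a ∈ A : a < j and a ≠ greedyMatch A B j' for all j' ∈ B
with j' < j }`.  Applied with `A = R₁`, `B = R₂` it produces the left arcs
`(greedyMatch R₁ R₂ j, j)`; applied with `A = R₂`, `B = R₃` it produces the right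
arcs. -/
def greedyMatch (A B : Finset ℕ) (j : ℕ) : ℕ :=
  ((A \ usedMatches A B j).filter (· < j)).sup id

/-!
Row `R₂` of a standard tableau of shape `(n,n,n)` satisfies the ballot condition against
`R₁`: below the `c`-th entry of `R₂` there are `c` entries of `R₂` but at least `c + 1`
entries of `R₁` (the first `c + 1` entries of `R₁` lie above and to the left of it).
Under this condition the greedy matching never runs out of candidates: by induction,
when `j ∈ B` is processed exactly `#{j' ∈ B : j' < j}` matches have been used, fewer
than the `#{a ∈ A : a < j}` candidates below `j`.  Injectivity is built in, since
the match of `j` is chosen among the elements not used before `j`.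
-/

open Finset

def BallotCondition (A B : Finset ℕ) : Prop :=
  ∀ j ∈ B, #(B.filter (· < j)) < #(A.filter (· < j))

section StrictMono

variable {n : ℕ} {f : Fin n → ℕ}

lemma StrictMono.card_image_filter_lt_apply (hf : StrictMono f) (c : Fin n) :
    #((univ.image f).filter (· < f c)) = c := by
  have hbelow : univ.filter (fun c' => f c' < f c) = Iio c := by
    ext c'
    simp [hf.lt_iff_lt]
  rw [filter_image, hbelow, card_image_of_injective _ hf.injective, Fin.card_Iio]

lemma StrictMono.lt_card_image_filter_lt (hf : StrictMono f) {c : Fin n} {x : ℕ}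
    (hx : f c < x) : (c : ℕ) < #((univ.image f).filter (· < x)) := by
  have hsub : (Iic c).image f ⊆ (univ.image f).filter (· < x) := by
    intro y hy
    obtain ⟨c', hc', rfl⟩ := mem_image.mp hy
    exact mem_filter.mpr ⟨mem_image_of_mem f (mem_univ c'),
      (hf.monotone (mem_Iic.mp hc')).trans_lt hx⟩
  calc (c : ℕ) < #(Iic c) := by rw [Fin.card_Iic]; omega
    _ = #((Iic c).image f) := (card_image_of_injective _ hf.injective).symm
    _ ≤ _ := card_le_card hsub

end StrictMono

lemma IsStandardNNN.ballotCondition {n : ℕ} {T : Fin 3 → Fin n → ℕ}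
    (hT : IsStandardNNN n T) : BallotCondition (rowSet n T 0) (rowSet n T 1) := by
  obtain ⟨hrow, hcol, -⟩ := hT
  intro j hj
  obtain ⟨c, -, rfl⟩ := mem_image.mp hj
  rw [rowSet, rowSet, StrictMono.card_image_filter_lt_apply (fun _ _ => hrow 1 _ _)]
  exact StrictMono.lt_card_image_filter_lt (fun _ _ => hrow 0 _ _) (hcol 0 1 (by decide) c)

lemma filter_lt_succ_of_mem {s : Finset ℕ} {k : ℕ} (hk : k ∈ s) :
    s.filter (· < k + 1) = insert k (s.filter (· < k)) := by
  ext x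
  simp only [mem_filter, mem_insert]
  grind

lemma filter_lt_succ_of_notMem {s : Finset ℕ} {k : ℕ} (hk : k ∉ s) :
    s.filter (· < k + 1) = s.filter (· < k) := by
  ext x
  simp only [mem_filter]
  grind

section GreedyMatch

variable {A B : Finset ℕ}

lemma usedMatches_succ (k : ℕ) :
    usedMatches A B (k + 1) =
      if k ∈ B then insert (greedyMatch A B k) (usedMatches A B k) else usedMatches A B k := by
  simp only [usedMatches, greedyMatch, union_singleton]

lemma mem_usedMatches_iff {k x : ℕ} :
    x ∈ usedMatches A B k ↔ ∃ j ∈ B, j < k ∧ greedyMatch A B j = x := by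
  induction k with
  | zero => simp [usedMatches]
  | succ k ih =>
    rw [usedMatches_succ]
    split_ifs with hk
    · rw [mem_insert, ih]
      grind
    · rw [ih]
      grind

lemma greedyMatch_mem_of_card_lt {j : ℕ} (h : #(usedMatches A B j) < #(A.filter (· < j))) :
    greedyMatch A B j ∈ (A \ usedMatches A B j).filter (· < j) := by
  obtain ⟨a, ha, haU⟩ := exists_mem_notMem_of_card_lt_card h
  have hfree : ((A \ usedMatches A B j).filter (· < j)).Nonempty :=
    ⟨a, by simp only [mem_filter, mem_sdiff] at ha ⊢; exact ⟨⟨ha.1, haU⟩, ha.2⟩⟩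
  obtain ⟨m, hm, hsup⟩ := exists_mem_eq_sup _ hfree id
  rw [greedyMatch, hsup]
  exact hm

lemma BallotCondition.card_usedMatches (hAB : BallotCondition A B) (k : ℕ) :
    #(usedMatches A B k) = #(B.filter (· < k)) := by
  induction k with
  | zero => simp [usedMatches]
  | succ k ih =>
    rw [usedMatches_succ]
    split_ifs with hk
    · have hg := greedyMatch_mem_of_card_lt (ih ▸ hAB k hk)
      rw [card_insert_of_notMem (mem_sdiff.mp (mem_filter.mp hg).1).2, ih,
        filter_lt_succ_of_mem hk, card_insert_of_notMem (by simp)]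
    · rw [ih, filter_lt_succ_of_notMem hk]

lemma BallotCondition.greedyMatch_mem (hAB : BallotCondition A B) {j : ℕ} (hj : j ∈ B) :
    greedyMatch A B j ∈ (A \ usedMatches A B j).filter (· < j) :=
  greedyMatch_mem_of_card_lt (hAB.card_usedMatches j ▸ hAB j hj)

lemma BallotCondition.greedyMatch_injOn (hAB : BallotCondition A B) :
    Set.InjOn (greedyMatch A B) B := by
  have hne : ∀ j ∈ B, ∀ j' ∈ B, j < j' → greedyMatch A B j ≠ greedyMatch A B j' :=
    fun j hj j' hj' hlt heq =>
      (mem_sdiff.mp (mem_filter.mp (hAB.greedyMatch_mem hj')).1).2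
        (mem_usedMatches_iff.mpr ⟨j, hj, hlt, heq⟩)
  intro j hj j' hj' heq
  rcases lt_trichotomy j j' with hlt | rfl | hgt
  exacts [absurd heq (hne j hj j' hj' hlt), rfl, absurd heq.symm (hne j' hj' j hj hgt)]

end GreedyMatch

/-- The left-arc matching is well-defined: for each `j ∈ R₂` the set of available left
endpoints is nonempty, and the greedy rule `L = greedyMatch R₁ R₂` is injective on
`R₂`, takes values in `R₁`, and satisfies `L j < j`. -/
theorem left_arc_matching_well_defined (n : ℕ) (T : Fin 3 → Fin n → ℕ)
    (hT : IsStandardNNN n T) :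
    (∀ j ∈ rowSet n T 1,
      ((rowSet n T 0).filter fun i => i < j ∧
        ∀ j' ∈ rowSet n T 1, j' < j → greedyMatch (rowSet n T 0) (rowSet n T 1) j' ≠ i).Nonempty) ∧
    Set.InjOn (greedyMatch (rowSet n T 0) (rowSet n T 1)) ↑(rowSet n T 1) ∧
    (∀ j ∈ rowSet n T 1,
      greedyMatch (rowSet n T 0) (rowSet n T 1) j ∈ rowSet n T 0 ∧
      greedyMatch (rowSet n T 0) (rowSet n T 1) j < j) := by
  have hAB := hT.ballotCondition
  have hmem (j) (hj : j ∈ rowSet n T 1) := mem_filter.mp (hAB.greedyMatch_mem hj)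
  refine ⟨fun j hj => ?_, hAB.greedyMatch_injOn,
    fun j hj => ⟨(mem_sdiff.mp (hmem j hj).1).1, (hmem j hj).2⟩⟩
  -- the greedy choice itself is an available left endpoint
  obtain ⟨hfree, hlt⟩ := hmem j hj
  obtain ⟨hA, hunused⟩ := mem_sdiff.mp hfree
  exact ⟨_, mem_filter.mpr ⟨hA, hlt, fun j' hj' hj'j heq =>
    hunused (mem_usedMatches_iff.mpr ⟨j', hj', hj'j, heq⟩)⟩⟩
end

section
/- The left arcs of an m-diagram are pairwise noncrossing: for a standard Young tableau T of shape (n,n,n) with rows R₁, R₂, R₃ and left-arc matching L, there do not exist j, j′ ∈ R₂ with L(j) < L(j′) < j < j′. -/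
lemma usedMatches_mono (A B : Finset ℕ) : Monotone (usedMatches A B) := by
  apply monotone_nat_of_le_succ
  intro m
  rw [usedMatches]
  split
  · exact Finset.subset_union_left
  · exact le_refl _

lemma greedy_key (A B : Finset ℕ) (j j' : ℕ) (hjj' : j ≤ j')
    (h2 : greedyMatch A B j' < j) : greedyMatch A B j' ≤ greedyMatch A B j := by
  rcases ((A \ usedMatches A B j').filter (· < j')).eq_empty_or_nonempty with he | hne
  · rw [greedyMatch, he]; simp
  · obtain ⟨b, hb, heq⟩ := Finset.exists_mem_eq_sup _ hne id
    rw [greedyMatch, heq] at h2 ⊢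
    simp only [Finset.mem_filter, Finset.mem_sdiff] at hb
    apply Finset.le_sup (f := id) (b := b)
    simp only [Finset.mem_filter, Finset.mem_sdiff]
    exact ⟨⟨hb.1.1, fun hm => hb.1.2 (usedMatches_mono A B hjj' hm)⟩, h2⟩

/-- The left arcs are pairwise noncrossing. -/
theorem left_arcs_noncrossing (n : ℕ) (T : Fin 3 → Fin n → ℕ)
    (hT : IsStandardNNN n T) :
    ¬ ∃ j ∈ rowSet n T 1, ∃ j' ∈ rowSet n T 1,
      greedyMatch (rowSet n T 0) (rowSet n T 1) j
          < greedyMatch (rowSet n T 0) (rowSet n T 1) j' ∧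
      greedyMatch (rowSet n T 0) (rowSet n T 1) j' < j ∧ j < j' := by
  rintro ⟨j, hj, j', hj', h1, h2, h3⟩
  exact absurd (greedy_key _ _ j j' h3.le h2) (not_le.mpr h1)
end

section
/- The right arcs of an m-diagram are pairwise noncrossing: for a standard Young tableau T of shape (n,n,n) with rows R₁, R₂, R₃ and right-arc matching R, there do not exist k, k′ ∈ R₃ with R(k) < R(k′) < k < k′. -/
lemma greedy_noncrossing (A B : Finset ℕ) :
    ¬ ∃ k ∈ B, ∃ k' ∈ B,
      greedyMatch A B k < greedyMatch A B k' ∧ greedyMatch A B k' < k ∧ k < k' := by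
  rintro ⟨k, hk, k', hk', h1, h2, h3⟩
  set S' := (A \ usedMatches A B k').filter (· < k') with hS'
  have hne : S'.Nonempty := by
    by_contra h
    rw [Finset.not_nonempty_iff_eq_empty] at h
    have : greedyMatch A B k' = 0 := by
      rw [greedyMatch, ← hS', h]; rfl
    omega
  obtain ⟨b, hb, hbeq⟩ := Finset.exists_mem_eq_sup S' hne id
  have hbmem := Finset.mem_filter.mp hb
  have hbA := Finset.mem_sdiff.mp hbmem.1
  have hRk' : greedyMatch A B k' = b := hbeq
  have hbk : b < k := by omega
  have hmem : b ∈ (A \ usedMatches A B k).filter (· < k) := by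
    refine Finset.mem_filter.mpr ⟨Finset.mem_sdiff.mpr ⟨hbA.1, fun hc => hbA.2 ?_⟩, by
      simpa using hbk⟩
    exact usedMatches_mono A B (le_of_lt h3) hc
  have : b ≤ greedyMatch A B k := Finset.le_sup (f := id) hmem
  omega

/-- The right arcs are pairwise noncrossing. -/
theorem right_arcs_noncrossing (n : ℕ) (T : Fin 3 → Fin n → ℕ)
    (hT : IsStandardNNN n T) :
    ¬ ∃ k ∈ rowSet n T 2, ∃ k' ∈ rowSet n T 2,
      greedyMatch (rowSet n T 1) (rowSet n T 2) k
          < greedyMatch (rowSet n T 1) (rowSet n T 2) k' ∧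
      greedyMatch (rowSet n T 1) (rowSet n T 2) k' < k ∧ k < k' := by
  exact greedy_noncrossing _ _
end

section
/- Let T be a standard Young tableau of shape (n,n,n) with rows R₁, R₂, R₃ and left-arc matching L. If (i, i+1) ∈ τ(T) with i in the top row and i+1 in the middle row (i.e., i ∈ R₁ and i+1 ∈ R₂), then the left arc at i+1 connects i+1 to i: L(i+1) = i. -/
lemma usedMatches_mem_bound (A B : Finset ℕ) :
    ∀ m, ∀ x ∈ usedMatches A B m, x = 0 ∨ x + 1 < m := by
  intro m
  induction m with
  | zero => intro x hx; simp [usedMatches] at hx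
  | succ m ih =>
    intro x hx
    unfold usedMatches at hx
    by_cases hm : m ∈ B
    · simp only [hm, if_true, Finset.mem_union, Finset.mem_singleton] at hx
      rcases hx with hx | hx
      · rcases ih x hx with h | h
        · exact Or.inl h
        · exact Or.inr (Nat.lt_succ_of_lt h)
      · subst hx
        rcases Nat.eq_zero_or_pos m with hm0 | hm0
        · subst hm0
          left
          have : ((A \ usedMatches A B 0).filter (· < 0)) = ∅ := by
            ext a; simp
          simp [this]
        · right
          have : ((A \ usedMatches A B m).filter (· < m)).sup id < m := by
            rw [Finset.sup_lt_iff hm0]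
            intro b hb
            exact (Finset.mem_filter.mp hb).2
          omega
    · simp only [hm, if_false] at hx
      rcases ih x hx with h | h
      · exact Or.inl h
      · exact Or.inr (Nat.lt_succ_of_lt h)

/-- If `i ∈ R₁` and `i + 1 ∈ R₂`, then `L (i+1) = i`. -/
theorem left_arc_of_tau_pair (n : ℕ) (T : Fin 3 → Fin n → ℕ)
    (hT : IsStandardNNN n T) (i : ℕ)
    (hi : i ∈ rowSet n T 0) (hi1 : i + 1 ∈ rowSet n T 1) :
    greedyMatch (rowSet n T 0) (rowSet n T 1) (i + 1) = i := by
  have hi1pos : 1 ≤ i := by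
    obtain ⟨c, _, hc⟩ := Finset.mem_image.mp hi
    have := hT.2.2.1 0 c
    rw [hc] at this
    exact (Finset.mem_Icc.mp this).1
  have hnotused : i ∉ usedMatches (rowSet n T 0) (rowSet n T 1) (i + 1) := by
    intro h
    rcases usedMatches_mem_bound _ _ (i + 1) i h with h0 | h0 <;> omega
  have hiS : i ∈ ((rowSet n T 0 \ usedMatches (rowSet n T 0) (rowSet n T 1) (i + 1)).filter
      (· < i + 1)) := by
    refine Finset.mem_filter.mpr ⟨Finset.mem_sdiff.mpr ⟨hi, hnotused⟩, ?_⟩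
    simp
  unfold greedyMatch
  refine le_antisymm (Finset.sup_le fun b hb => ?_) (Finset.le_sup (f := id) hiS)
  have := (Finset.mem_filter.mp hb).2
  simp only [id] at *
  omega
end
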